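/- For a real n×n matrix θ with all entries strictly positive, there exists an eigenvector with all coordinates strictly positive whose eigenvalue is the spectral radius of θ (Perron–Frobenius theorem for positive matrices). -/

import Mathlib

/-!
Collatz–Wielandt argument. Among all pairs `(c, v)` with `v ≥ 0`, `v ≠ 0` and
`c • v ≤ A v`, `c` is bounded by the sum of the entries of `A`, and normalising `v` to the
standard simplex makes the set of such pairs compact, so a largest such `c`, say `r`, is
attained at some `v`. If `A v ≠ r • v`, then applying the positive matrix `A` to
`A v - r • v ≥ 0` gives `A (A v) > r • A v` in every coordinate, so a slightly larger `c`
works for `A v`: hence `v` is an eigenvector for `r`. Finally, an eigenvector `z` of `A` for a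
complex eigenvalue `μ` gives `‖μ‖ • |z| ≤ A |z|` by the triangle inequality, so `‖μ‖ ≤ r`.
-/

open Filter Topology

namespace Matrix

variable {ι : Type*} [Fintype ι] {A : Matrix ι ι ℝ}

def collatzWielandtSet (A : Matrix ι ι ℝ) : Set ℝ :=
  {c | ∃ v : ι → ℝ, 0 ≤ v ∧ v ≠ 0 ∧ c • v ≤ A *ᵥ v}

lemma mulVec_pos_of_pos (hA : ∀ i j, 0 < A i j) {v : ι → ℝ} (hv : 0 ≤ v) (hv0 : v ≠ 0)
    (i : ι) : 0 < (A *ᵥ v) i := by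
  obtain ⟨j, hj⟩ := Function.ne_iff.mp hv0
  exact Finset.sum_pos' (fun k _ => mul_nonneg (hA i k).le (hv k))
    ⟨j, Finset.mem_univ j, mul_pos (hA i j) ((hv j).lt_of_ne' hj)⟩

lemma pos_of_mulVec_eq_smul (hA : ∀ i j, 0 < A i j) {c : ℝ} {v : ι → ℝ} (hv : 0 ≤ v)
    (hv0 : v ≠ 0) (hcv : A *ᵥ v = c • v) (i : ι) : 0 < v i := by
  have hpos := mulVec_pos_of_pos hA hv hv0 i
  refine (hv i).lt_of_ne' fun hvi => hpos.ne' ?_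
  rw [hcv, Pi.smul_apply, hvi, Pi.zero_apply, smul_zero]

lemma smul_le_mulVec_smul {c t : ℝ} {v : ι → ℝ} (ht : 0 ≤ t) (h : c • v ≤ A *ᵥ v) :
    c • t • v ≤ A *ᵥ (t • v) := by
  rw [mulVec_smul, smul_comm]
  exact smul_le_smul_of_nonneg_left h ht

lemma le_sum_sum_of_smul_le_mulVec (hA : ∀ i j, 0 ≤ A i j) {c : ℝ} {v : ι → ℝ}
    (hv : v ∈ stdSimplex ℝ ι) (h : c • v ≤ A *ᵥ v) : c ≤ ∑ i, ∑ j, A i j :=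
  calc c = ∑ i, c * v i := by rw [← Finset.mul_sum, hv.2, mul_one]
    _ ≤ ∑ i, (A *ᵥ v) i := Finset.sum_le_sum fun i _ => h i
    _ ≤ ∑ i, ∑ j, A i j := Finset.sum_le_sum fun i _ => Finset.sum_le_sum fun j _ =>
        mul_le_of_le_one_right (hA i j) (mem_Icc_of_mem_stdSimplex hv j).2

lemma inv_sum_smul_mem_stdSimplex {v : ι → ℝ} (hv : 0 ≤ v) (hv0 : v ≠ 0) :
    (∑ i, v i)⁻¹ • v ∈ stdSimplex ℝ ι := by
  obtain ⟨j, hj⟩ := Function.ne_iff.mp hv0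
  have hsum : 0 < ∑ i, v i :=
    Finset.sum_pos' (fun i _ => hv i) ⟨j, Finset.mem_univ j, (hv j).lt_of_ne' hj⟩
  refine ⟨fun i => mul_nonneg (inv_nonneg.2 hsum.le) (hv i), ?_⟩
  simp only [Pi.smul_apply, smul_eq_mul, ← Finset.mul_sum]
  exact inv_mul_cancel₀ hsum.ne'

lemma exists_isGreatest_collatzWielandtSet [Nonempty ι] (hA : ∀ i j, 0 ≤ A i j) :
    ∃ r, IsGreatest (collatzWielandtSet A) r := by
  classical
  set K : Set (ℝ × (ι → ℝ)) :=
    (Set.Icc 0 (∑ i, ∑ j, A i j) ×ˢ stdSimplex ℝ ι) ∩ {p | p.1 • p.2 ≤ A *ᵥ p.2}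
  have hK : IsCompact K := (isCompact_Icc.prod (isCompact_stdSimplex ℝ ι)).inter_right
    (isClosed_le (by fun_prop) (by fun_prop))
  obtain ⟨i⟩ := ‹Nonempty ι›
  have hK0 : ((0 : ℝ), Pi.single i 1) ∈ K := by
    refine ⟨⟨⟨le_rfl, ?_⟩, single_mem_stdSimplex ℝ i⟩, ?_⟩
    · exact Finset.sum_nonneg fun i _ => Finset.sum_nonneg fun j _ => hA i j
    · intro k
      simpa [mulVec_single] using hA k i
  obtain ⟨⟨r, v⟩, ⟨⟨hr, hv⟩, hrv⟩, hmax⟩ :=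
    hK.exists_isMaxOn ⟨_, hK0⟩ continuous_fst.continuousOn
  refine ⟨r, ⟨v, hv.1, fun h => by simpa [h] using hv.2, hrv⟩, ?_⟩
  rintro c ⟨w, hw, hw0, hcw⟩
  rcases le_or_gt c 0 with hc | hc
  · exact hc.trans hr.1
  have hw' := inv_sum_smul_mem_stdSimplex hw hw0
  have hcw' := smul_le_mulVec_smul (inv_nonneg.2 (Fintype.sum_nonneg hw)) hcw
  exact hmax (show (c, _) ∈ K from
    ⟨⟨⟨hc.le, le_sum_sum_of_smul_le_mulVec hA hw' hcw'⟩, hw'⟩, hcw'⟩)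

lemma exists_gt_smul_le_of_forall_mul_lt {c : ℝ} {u x : ι → ℝ} (h : ∀ i, c * u i < x i) :
    ∃ c' > c, c' • u ≤ x := by
  have hnear : ∀ᶠ c' in 𝓝[>] c, ∀ i, c' * u i < x i :=
    nhdsWithin_le_nhds <| eventually_all.2 fun i =>
      (continuous_mul_const (u i)).continuousAt.eventually_lt continuousAt_const (h i)
  obtain ⟨c', hlt, hc'⟩ := (hnear.and eventually_mem_nhdsWithin).exists
  exact ⟨c', hc', fun i => (hlt i).le⟩

lemma mulVec_eq_smul_of_mem_upperBounds (hA : ∀ i j, 0 < A i j) {r : ℝ}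
    (hr : r ∈ upperBounds (collatzWielandtSet A)) {v : ι → ℝ} (hv : 0 ≤ v) (hv0 : v ≠ 0)
    (hrv : r • v ≤ A *ᵥ v) : A *ᵥ v = r • v := by
  by_contra hne
  set u := A *ᵥ v
  have hu : ∀ i, 0 < u i := mulVec_pos_of_pos hA hv hv0
  have hstrict : ∀ i, r * u i < (A *ᵥ u) i := by
    intro i
    have := mulVec_pos_of_pos hA (sub_nonneg.2 hrv) (sub_ne_zero.2 hne) i
    rwa [mulVec_sub, mulVec_smul, Pi.sub_apply, Pi.smul_apply, smul_eq_mul, sub_pos] at this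
  obtain ⟨c, hc, hcu⟩ := exists_gt_smul_le_of_forall_mul_lt hstrict
  obtain ⟨i, -⟩ := Function.ne_iff.mp hv0
  exact (hr ⟨u, fun i => (hu i).le, fun h => (hu i).ne' (congrFun h i), hcu⟩).not_gt hc

lemma exists_mulVec_eq_smul_of_mem_spectrum {K : Type*} [Field K] [DecidableEq ι]
    {M : Matrix ι ι K} {μ : K} (hμ : μ ∈ spectrum K M) :
    ∃ z ≠ 0, M *ᵥ z = μ • z := by
  rw [← spectrum_toLin', ← Module.End.hasEigenvalue_iff_mem_spectrum] at hμ
  obtain ⟨z, hz, hz0⟩ := hμ.exists_hasEigenvector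
  exact ⟨z, hz0, Module.End.mem_eigenspace_iff.1 hz⟩

lemma norm_smul_le_mulVec_norm (hA : ∀ i j, 0 ≤ A i j) {μ : ℂ} {z : ι → ℂ}
    (hz : A.map Complex.ofReal *ᵥ z = μ • z) :
    ‖μ‖ • (fun i => ‖z i‖) ≤ A *ᵥ fun i => ‖z i‖ := fun i =>
  calc ‖μ‖ * ‖z i‖ = ‖∑ j, (A i j : ℂ) * z j‖ := by
        rw [← norm_mul, ← smul_eq_mul, ← Pi.smul_apply, ← hz]; rfl
    _ ≤ ∑ j, ‖(A i j : ℂ) * z j‖ := norm_sum_le _ _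
    _ = (A *ᵥ fun i => ‖z i‖) i := by
        simp [mulVec, dotProduct, Complex.norm_real, abs_of_nonneg (hA i _)]

lemma norm_mem_collatzWielandtSet [DecidableEq ι] (hA : ∀ i j, 0 ≤ A i j) {μ : ℂ}
    (hμ : μ ∈ spectrum ℂ (A.map Complex.ofReal)) : ‖μ‖ ∈ collatzWielandtSet A := by
  obtain ⟨z, hz0, hz⟩ := exists_mulVec_eq_smul_of_mem_spectrum hμ
  obtain ⟨i, hi⟩ := Function.ne_iff.mp hz0
  exact ⟨_, fun i => norm_nonneg (z i), fun h => hi (norm_eq_zero.1 (congrFun h i)),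
    norm_smul_le_mulVec_norm hA hz⟩

end Matrix

/-- Perron–Frobenius for entrywise positive matrices: there is a strictly positive
eigenvector whose eigenvalue dominates in modulus every (complex) eigenvalue, i.e.
whose eigenvalue is the spectral radius. -/
theorem perron_frobenius_positive {n : ℕ} (hn : 0 < n)
    (θ : Matrix (Fin n) (Fin n) ℝ) (hθ : ∀ i j, 0 < θ i j) :
    ∃ (v : Fin n → ℝ) (lam : ℝ), (∀ i, 0 < v i) ∧ θ.mulVec v = lam • v ∧
      ∀ μ ∈ spectrum ℂ (θ.map (Complex.ofReal)), ‖μ‖ ≤ lam := by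
  have : Nonempty (Fin n) := ⟨⟨0, hn⟩⟩
  have hθ₀ : ∀ i j, 0 ≤ θ i j := fun i j => (hθ i j).le
  obtain ⟨r, ⟨v, hv, hv0, hrv⟩, hr⟩ := Matrix.exists_isGreatest_collatzWielandtSet hθ₀
  have heig := Matrix.mulVec_eq_smul_of_mem_upperBounds hθ hr hv hv0 hrv
  exact ⟨v, r, Matrix.pos_of_mulVec_eq_smul hθ hv hv0 heig, heig,
    fun μ hμ => hr (Matrix.norm_mem_collatzWielandtSet hθ₀ hμ)⟩
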